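/- arXiv:1909.07681 — 3 statements merged into one kernel-verified Lean document; each statement's English description precedes it below -/
import Mathlib

section
/- Let E be a Banach lattice and let P : E → E be a band projection, i.e., a continuous linear map with P ∘ P = P and 0 ≤ P x ≤ x for every x ≥ 0. Then P is uaw-continuous: for every net (x_α) indexed by a directed set and every x ∈ E, if (x_α) uaw-converges to x (that is, for every u ∈ E with u ≥ 0 the net |x_α − x| ⊓ u converges to 0 in the weak topology of E), then (P x_α) uaw-converges to P x. -/
/-!
A band projection `P` commutes with the modulus, `P |y| = |P y|`: the inequality `|P y| ≤ P |y|` is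
positivity, and the reverse follows from `|y| ≤ |P y| + |y - P y|` because `P` kills
`|y - P y| ≤ (1 - P) |y|`. It also commutes with truncation, `P (a ⊓ u) = P a ⊓ u` for `a, u ≥ 0`,
since `P a ⊓ u` lies below `P a` and is therefore fixed by `P`. Hence
`|P xᵢ - P x₀| ⊓ u = P (|xᵢ - x₀| ⊓ u)`, and testing the uaw-convergence of `xᵢ` against the
functional `f ∘ P` gives the uaw-convergence of `P xᵢ`.
-/

open Filter Topology

structure AddMonoidHom.IsBandProjection {E : Type*} [AddCommGroup E] [Lattice E] (P : E →+ E) :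
    Prop where
  map_map : ∀ x, P (P x) = P x
  map_nonneg : ∀ x, 0 ≤ x → 0 ≤ P x
  map_le : ∀ x, 0 ≤ x → P x ≤ x

namespace AddMonoidHom.IsBandProjection

variable {E : Type*} [AddCommGroup E] [Lattice E] [IsOrderedAddMonoid E] {P : E →+ E}

theorem monotone (hP : P.IsBandProjection) : Monotone P :=
  (monotone_iff_map_nonneg P).2 hP.map_nonneg

theorem compl (hP : P.IsBandProjection) : (AddMonoidHom.id E - P).IsBandProjection where
  map_map x := by simp [hP.map_map]
  map_nonneg x hx := by simpa using hP.map_le x hx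
  map_le x hx := by simpa using hP.map_nonneg x hx

theorem abs_map_le_map_abs (hP : P.IsBandProjection) (y : E) : |P y| ≤ P |y| :=
  abs_le'.2 ⟨hP.monotone (le_abs_self y), by simpa using hP.monotone (neg_le_abs y)⟩

theorem map_abs (hP : P.IsBandProjection) (y : E) : P |y| = |P y| := by
  have hcompl : P |y - P y| = 0 := by
    refine le_antisymm ?_ (hP.map_nonneg _ (abs_nonneg _))
    simpa [hP.map_map] using hP.monotone (hP.compl.abs_map_le_map_abs y)
  refine le_antisymm ?_ (hP.abs_map_le_map_abs y)
  calc P |y| ≤ P (|P y| + |y - P y|) := hP.monotone (by simpa using abs_add_le (P y) (y - P y))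
    _ = P |P y| := by rw [map_add, hcompl, add_zero]
    _ ≤ |P y| := hP.map_le _ (abs_nonneg _)

theorem map_eq_self_of_le_map (hP : P.IsBandProjection) {m z : E} (hm : 0 ≤ m) (h : m ≤ P z) :
    P m = m := by
  refine le_antisymm (hP.map_le m hm) ?_
  have := hP.map_le (P z - m) (sub_nonneg.2 h)
  rwa [map_sub, hP.map_map, sub_le_sub_iff_left] at this

theorem map_inf (hP : P.IsBandProjection) {a u : E} (ha : 0 ≤ a) (hu : 0 ≤ u) :
    P (a ⊓ u) = P a ⊓ u := by
  refine le_antisymm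
    (le_inf (hP.monotone inf_le_left) ((hP.map_le _ (le_inf ha hu)).trans inf_le_right)) ?_
  calc P a ⊓ u = P (P a ⊓ u) :=
        (hP.map_eq_self_of_le_map (le_inf (hP.map_nonneg a ha) hu) inf_le_left).symm
    _ ≤ P (a ⊓ u) := hP.monotone (inf_le_inf_right u (hP.map_le a ha))

theorem abs_map_sub_map_inf (hP : P.IsBandProjection) (y z : E) {u : E} (hu : 0 ≤ u) :
    |P y - P z| ⊓ u = P (|y - z| ⊓ u) := by
  rw [hP.map_inf (abs_nonneg _) hu, hP.map_abs, map_sub]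

end AddMonoidHom.IsBandProjection

theorem band_projection_uaw_continuous_general
    {E : Type*} [NormedAddCommGroup E] [Lattice E] [IsOrderedAddMonoid E] [NormedSpace ℝ E]
    (P : E →L[ℝ] E)
    (hidem : ∀ x : E, P (P x) = P x)
    (hband : ∀ x : E, 0 ≤ x → 0 ≤ P x ∧ P x ≤ x)
    (ι : Type*) [Preorder ι]
    (x : ι → E) (x₀ : E)
    (hx : ∀ u : E, 0 ≤ u → ∀ f : E →L[ℝ] ℝ,
      Tendsto (fun i => f (|x i - x₀| ⊓ u)) atTop (𝓝 0)) :
    ∀ u : E, 0 ≤ u → ∀ f : E →L[ℝ] ℝ,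
      Tendsto (fun i => f (|P (x i) - P x₀| ⊓ u)) atTop (𝓝 0) := by
  have hP : (P : E →+ E).IsBandProjection :=
    ⟨hidem, fun x hx => (hband x hx).1, fun x hx => (hband x hx).2⟩
  intro u hu f
  refine (hx u hu (f.comp P)).congr fun i => ?_
  have h := hP.abs_map_sub_map_inf (x i) x₀ hu
  simp only [AddMonoidHom.coe_coe] at h
  rw [ContinuousLinearMap.comp_apply, h]

/-- a band projection on a Banach lattice is uaw-continuous (for nets). -/
theorem band_projection_uaw_continuous
    {E : Type*} [NormedAddCommGroup E] [Lattice E] [HasSolidNorm E] [IsOrderedAddMonoid E] [NormedSpace ℝ E] [CompleteSpace E]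
    (P : E →L[ℝ] E)
    (hidem : ∀ x : E, P (P x) = P x)
    (hband : ∀ x : E, 0 ≤ x → 0 ≤ P x ∧ P x ≤ x)
    (ι : Type*) [Preorder ι] [IsDirected ι (· ≤ ·)] [Nonempty ι]
    (x : ι → E) (x₀ : E)
    (hx : ∀ u : E, 0 ≤ u → ∀ f : E →L[ℝ] ℝ,
      Tendsto (fun i => f (|x i - x₀| ⊓ u)) atTop (𝓝 0)) :
    ∀ u : E, 0 ≤ u → ∀ f : E →L[ℝ] ℝ,
      Tendsto (fun i => f (|P (x i) - P x₀| ⊓ u)) atTop (𝓝 0) :=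
  band_projection_uaw_continuous_general P hidem hband ι x x₀ hx
end

section
/- Let E and F be Banach lattices and let T : E → F be a surjective continuous lattice homomorphism. If T is a Dunford-Pettis operator, then T is σ-unbounded Dunford-Pettis. -/
open Filter Topology

/-- The class `NormedLatticeAddCommGroup` as it stood in the older Mathlib (removed since). -/
class NormedLatticeAddCommGroup (α : Type*) extends NormedAddCommGroup α, Lattice α where
  add_le_add_left : ∀ a b : α, a ≤ b → ∀ c : α, c + a ≤ c + b
  solid : ∀ a b : α, |a| ≤ |b| → ‖a‖ ≤ ‖b‖

/-- A sequence in a Banach lattice is uaw-null if `|x n| ⊓ u` converges weakly to `0`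
for every `u ≥ 0`. -/
def UawNullSeq {E : Type*} [NormedLatticeAddCommGroup E] [NormedSpace ℝ E]
    (x : ℕ → E) : Prop :=
  ∀ u : E, 0 ≤ u → ∀ f : E →L[ℝ] ℝ,
    Tendsto (fun n => f (|x n| ⊓ u)) atTop (𝓝 0)

/-- A sequence in a Banach lattice is un-null if `‖|y n| ⊓ v‖ → 0` for every `v ≥ 0`. -/
def UnNullSeq {F : Type*} [NormedLatticeAddCommGroup F] [NormedSpace ℝ F]
    (y : ℕ → F) : Prop :=
  ∀ v : F, 0 ≤ v → Tendsto (fun n => ‖|y n| ⊓ v‖) atTop (𝓝 0)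

/-- A sequence is weakly null if `f (x n) → 0` for every continuous linear functional `f`. -/
def WeaklyNullSeq {E : Type*} [NormedAddCommGroup E] [NormedSpace ℝ E]
    (x : ℕ → E) : Prop :=
  ∀ f : E →L[ℝ] ℝ, Tendsto (fun n => f (x n)) atTop (𝓝 0)

/-- σ-unbounded Dunford-Pettis operator. -/
def SigmaUDP {E F : Type*} [NormedLatticeAddCommGroup E] [NormedSpace ℝ E]
    [NormedLatticeAddCommGroup F] [NormedSpace ℝ F] (T : E →L[ℝ] F) : Prop :=
  ∀ x : ℕ → E, (∃ C : ℝ, ∀ n, ‖x n‖ ≤ C) → UawNullSeq x → UnNullSeq fun n => T (x n)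

/-- Dunford-Pettis operator: maps weakly null sequences to norm null sequences. -/
def DunfordPettis {E F : Type*} [NormedAddCommGroup E] [NormedSpace ℝ E]
    [NormedAddCommGroup F] [NormedSpace ℝ F] (T : E →L[ℝ] F) : Prop :=
  ∀ x : ℕ → E, WeaklyNullSeq x → Tendsto (fun n => ‖T (x n)‖) atTop (𝓝 0)

/-- A net (indexed by a directed preorder) is uaw-null. -/
def UawNullNet {E : Type*} [NormedLatticeAddCommGroup E] [NormedSpace ℝ E]
    {ι : Type} [Preorder ι] (x : ι → E) : Prop :=
  ∀ u : E, 0 ≤ u → ∀ f : E →L[ℝ] ℝ,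
    Tendsto (fun i => f (|x i| ⊓ u)) atTop (𝓝 0)

/-- A net (indexed by a directed preorder) is un-null. -/
def UnNullNet {F : Type*} [NormedLatticeAddCommGroup F] [NormedSpace ℝ F]
    {ι : Type} [Preorder ι] (y : ι → F) : Prop :=
  ∀ v : F, 0 ≤ v → Tendsto (fun i => ‖|y i| ⊓ v‖) atTop (𝓝 0)

/-- Unbounded Dunford-Pettis operator: maps norm bounded uaw-null nets to un-null nets. -/
def UDP {E F : Type*} [NormedLatticeAddCommGroup E] [NormedSpace ℝ E]
    [NormedLatticeAddCommGroup F] [NormedSpace ℝ F] (T : E →L[ℝ] F) : Prop :=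
  ∀ (ι : Type) [Preorder ι] [IsDirected ι (· ≤ ·)] [Nonempty ι] (x : ι → E),
    (∃ C : ℝ, ∀ i, ‖x i‖ ≤ C) → UawNullNet x → UnNullNet fun i => T (x i)

/-- uaw-continuous operator: maps norm bounded uaw-null nets to uaw-null nets. -/
def UawContinuous {E F : Type*} [NormedLatticeAddCommGroup E] [NormedSpace ℝ E]
    [NormedLatticeAddCommGroup F] [NormedSpace ℝ F] (T : E →L[ℝ] F) : Prop :=
  ∀ (ι : Type) [Preorder ι] [IsDirected ι (· ≤ ·)] [Nonempty ι] (x : ι → E),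
    (∃ C : ℝ, ∀ i, ‖x i‖ ≤ C) → UawNullNet x → UawNullNet fun i => T (x i)

/-- A Banach lattice has order continuous norm if every decreasing net with infimum `0`
converges to `0` in norm. -/
def OrderContinuousNorm (E : Type*) [NormedLatticeAddCommGroup E] : Prop :=
  ∀ (ι : Type) [Preorder ι] [IsDirected ι (· ≤ ·)] [Nonempty ι] (x : ι → E),
    Antitone x → IsGLB (Set.range x) 0 → Tendsto (fun i => ‖x i‖) atTop (𝓝 0)

/-- The norm dual of `E` has order continuous norm. -/
def DualOrderContinuousNorm (E : Type*) [NormedLatticeAddCommGroup E] [NormedSpace ℝ E] :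
    Prop :=
  ∀ (ι : Type) [Preorder ι] [IsDirected ι (· ≤ ·)] [Nonempty ι] (f : ι → E →L[ℝ] ℝ),
    (∀ i, ∀ x : E, 0 ≤ x → 0 ≤ f i x) →
    (∀ i j, i ≤ j → ∀ x : E, 0 ≤ x → f j x ≤ f i x) →
    (∀ x : E, 0 ≤ x → IsGLB (Set.range fun i => f i x) 0) →
    Tendsto (fun i => ‖f i‖) atTop (𝓝 0)

/-- Strong order unit. -/
def HasStrongOrderUnit (F : Type*) [NormedLatticeAddCommGroup F] : Prop :=
  ∃ e : F, 0 ≤ e ∧ ∀ y : F, ∃ n : ℕ, |y| ≤ n • e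

/-- AM-space. -/
def IsAMSpace (E : Type*) [NormedLatticeAddCommGroup E] : Prop :=
  ∀ x y : E, 0 ≤ x → 0 ≤ y → ‖x ⊔ y‖ = max ‖x‖ ‖y‖

/-- An atom of a Banach lattice. -/
def IsLatticeAtom {E : Type*} [NormedLatticeAddCommGroup E] [NormedSpace ℝ E] (a : E) :
    Prop :=
  0 < a ∧ ∀ x : E, 0 ≤ x → x ≤ a → ∃ c : ℝ, x = c • a

/-- An atomic Banach lattice: below every `x > 0` there is an atom. -/
def IsAtomicLattice (E : Type*) [NormedLatticeAddCommGroup E] [NormedSpace ℝ E] : Prop :=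
  ∀ x : E, 0 < x → ∃ a : E, IsLatticeAtom a ∧ a ≤ x

/-- Relatively sequentially un-compact set. -/
def RelSeqUnCompact {F : Type*} [NormedLatticeAddCommGroup F] [NormedSpace ℝ F]
    (A : Set F) : Prop :=
  ∀ y : ℕ → F, (∀ n, y n ∈ A) →
    ∃ (z : F) (φ : ℕ → ℕ), StrictMono φ ∧
      ∀ v : F, 0 ≤ v → Tendsto (fun k => ‖|y (φ k) - z| ⊓ v‖) atTop (𝓝 0)

/-- Sequentially un-compact operator. -/
def SeqUnCompactOp {E F : Type*} [NormedLatticeAddCommGroup E] [NormedSpace ℝ E]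
    [NormedLatticeAddCommGroup F] [NormedSpace ℝ F] (S : E →L[ℝ] F) : Prop :=
  RelSeqUnCompact (S '' Metric.closedBall 0 1)

/-- M-weakly compact operator. -/
def MWeaklyCompact {E F : Type*} [NormedLatticeAddCommGroup E] [NormedSpace ℝ E]
    [NormedAddCommGroup F] [NormedSpace ℝ F] (T : E →L[ℝ] F) : Prop :=
  ∀ x : ℕ → E, (∃ C : ℝ, ∀ n, ‖x n‖ ≤ C) →
    (∀ i j, i ≠ j → |x i| ⊓ |x j| = 0) →
    Tendsto (fun n => ‖T (x n)‖) atTop (𝓝 0)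

/-- L-weakly compact operator. -/
def LWeaklyCompact {E F : Type*} [NormedAddCommGroup E] [NormedSpace ℝ E]
    [NormedLatticeAddCommGroup F] [NormedSpace ℝ F] (T : E →L[ℝ] F) : Prop :=
  ∀ y : ℕ → F, (∀ n, ∃ a ∈ T '' Metric.closedBall 0 1, |y n| ≤ |a|) →
    (∀ i j, i ≠ j → |y i| ⊓ |y j| = 0) →
    Tendsto (fun n => ‖y n‖) atTop (𝓝 0)

/-- Relatively weakly compact subset of a normed space. -/
def RelWeaklyCompact {F : Type*} [NormedAddCommGroup F] [NormedSpace ℝ F] (S : Set F) :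
    Prop :=
  IsCompact (closure ((toWeakSpace ℝ F) '' S))

/-- weak Dunford-Pettis operator. -/
def WeakDunfordPettis {E F : Type*} [NormedAddCommGroup E] [NormedSpace ℝ E]
    [NormedAddCommGroup F] [NormedSpace ℝ F] (T : E →L[ℝ] F) : Prop :=
  ∀ x : ℕ → E, WeaklyNullSeq x →
    ∀ f : ℕ → (F →L[ℝ] ℝ),
      (∀ G : (F →L[ℝ] ℝ) →L[ℝ] ℝ, Tendsto (fun n => G (f n)) atTop (𝓝 0)) →
      Tendsto (fun n => f n (T (x n))) atTop (𝓝 0)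

/-- Dedekind complete lattice. -/
def DedekindComplete (E : Type*) [Lattice E] : Prop :=
  ∀ s : Set E, s.Nonempty → BddAbove s → ∃ a, IsLUB s a

/-- Dedekind σ-complete lattice. -/
def DedekindSigmaComplete (E : Type*) [Lattice E] : Prop :=
  ∀ s : Set E, s.Countable → s.Nonempty → BddAbove s → ∃ a, IsLUB s a

/- Since `T` is a surjective lattice homomorphism, every `v ≥ 0` is `T u` for some `u ≥ 0`, and
then `|T xₙ| ⊓ v = T (|xₙ| ⊓ u)`. For a uaw-null `x` the sequence `|xₙ| ⊓ u` is weakly null,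
so the Dunford-Pettis property makes its image norm null. -/

instance NormedLatticeAddCommGroup.toAddLeftMono {α : Type*} [NormedLatticeAddCommGroup α] :
    AddLeftMono α :=
  ⟨fun c _ _ h => NormedLatticeAddCommGroup.add_le_add_left _ _ h c⟩

section LatticeAddHom

variable {α β 𝓕 : Type*} [Lattice α] [AddCommGroup α] [Lattice β] [AddCommGroup β]
  [FunLike 𝓕 α β] [AddMonoidHomClass 𝓕 α β]

theorem map_inf_of_map_sup [AddLeftMono α] [AddLeftMono β] {f : 𝓕}
    (hf : ∀ x y, f (x ⊔ y) = f x ⊔ f y) (x y : α) :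
    f (x ⊓ y) = f x ⊓ f y := by
  have hx : x ⊓ y = x + y - (x ⊔ y) := eq_sub_of_add_eq (inf_add_sup x y)
  rw [hx, map_sub, map_add, hf, ← inf_add_sup (f x) (f y), add_sub_cancel_right]

theorem map_abs_of_map_sup {f : 𝓕} (hf : ∀ x y, f (x ⊔ y) = f x ⊔ f y) (x : α) :
    f |x| = |f x| := by
  rw [abs, hf, map_neg, abs]

theorem exists_nonneg_apply_eq_of_map_sup {f : 𝓕} (hf : ∀ x y, f (x ⊔ y) = f x ⊔ f y)
    (hsurj : Function.Surjective f) {v : β} (hv : 0 ≤ v) : ∃ u, 0 ≤ u ∧ f u = v := by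
  obtain ⟨w, rfl⟩ := hsurj v
  exact ⟨w ⊔ 0, le_sup_right, by rw [hf, map_zero, sup_of_le_left hv]⟩

end LatticeAddHom

theorem DunfordPettis.tendsto_norm_apply_abs_inf {E F : Type*} [NormedLatticeAddCommGroup E]
    [NormedSpace ℝ E] [NormedAddCommGroup F] [NormedSpace ℝ F] {T : E →L[ℝ] F}
    (hT : DunfordPettis T) {x : ℕ → E} (hx : UawNullSeq x) {u : E} (hu : 0 ≤ u) :
    Tendsto (fun n => ‖T (|x n| ⊓ u)‖) atTop (𝓝 0) :=
  hT _ (hx u hu)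

theorem surjective_latticeHom_dunfordPettis_sigmaUDP_general
    {E F : Type*} [NormedLatticeAddCommGroup E] [NormedSpace ℝ E]
    [NormedLatticeAddCommGroup F] [NormedSpace ℝ F]
    (T : E →L[ℝ] F) (hsurj : Function.Surjective T)
    (hhom : ∀ x y : E, T (x ⊔ y) = T x ⊔ T y)
    (hDP : DunfordPettis T) : SigmaUDP T := by
  intro x _ hx v hv
  obtain ⟨u, hu, rfl⟩ := exists_nonneg_apply_eq_of_map_sup hhom hsurj hv
  have hmap : ∀ n, |T (x n)| ⊓ T u = T (|x n| ⊓ u) := fun n => by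
    rw [map_inf_of_map_sup hhom, map_abs_of_map_sup hhom]
  simpa only [hmap] using hDP.tendsto_norm_apply_abs_inf hx hu

/-- a surjective continuous lattice homomorphism which is Dunford-Pettis
is σ-unbounded Dunford-Pettis. -/
theorem surjective_latticeHom_dunfordPettis_sigmaUDP
    {E F : Type*} [NormedLatticeAddCommGroup E] [NormedSpace ℝ E] [CompleteSpace E]
    [NormedLatticeAddCommGroup F] [NormedSpace ℝ F] [CompleteSpace F]
    (T : E →L[ℝ] F) (hsurj : Function.Surjective T)
    (hhom : ∀ x y : E, T (x ⊔ y) = T x ⊔ T y)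
    (hDP : DunfordPettis T) : SigmaUDP T :=
  surjective_latticeHom_dunfordPettis_sigmaUDP_general T hsurj hhom hDP
end

section
/- Let T : ℓ¹ → ℝ be the summation functional, T((x_n)) = Σ_{n=1}^∞ x_n. Then T is a compact operator (hence Dunford-Pettis), but T is not σ-unbounded Dunford-Pettis: the standard unit vectors (e_n) of ℓ¹ form a norm-bounded uaw-null sequence, while T e_n = 1 for every n, so (T e_n) does not converge to 0. -/
open Filter Topology

noncomputable section

/-- The Banach lattice `ℓ¹` of absolutely summable real sequences. -/
abbrev ell1 : Type := lp (fun _ : ℕ => ℝ) 1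

private lemma memℓp_sup {f g : ∀ _ : ℕ, ℝ} (hf : Memℓp f 1) (hg : Memℓp g 1) :
    Memℓp (fun i => f i ⊔ g i) 1 := by
  apply memℓp_gen
  have hf' := hf.summable (by norm_num)
  have hg' := hg.summable (by norm_num)
  refine Summable.of_nonneg_of_le (fun i => ?_) (fun i => ?_) (hf'.add hg')
  · positivity
  · simp only [ENNReal.toReal_one, Real.rpow_one, Real.norm_eq_abs]
    rcases le_total (f i) (g i) with h | h
    · rw [max_eq_right h]; exact le_add_of_nonneg_left (abs_nonneg _)
    · rw [max_eq_left h]; exact le_add_of_nonneg_right (abs_nonneg _)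

private lemma memℓp_inf {f g : ∀ _ : ℕ, ℝ} (hf : Memℓp f 1) (hg : Memℓp g 1) :
    Memℓp (fun i => f i ⊓ g i) 1 := by
  apply memℓp_gen
  have hf' := hf.summable (by norm_num)
  have hg' := hg.summable (by norm_num)
  refine Summable.of_nonneg_of_le (fun i => ?_) (fun i => ?_) (hf'.add hg')
  · positivity
  · simp only [ENNReal.toReal_one, Real.rpow_one, Real.norm_eq_abs]
    rcases le_total (f i) (g i) with h | h
    · rw [min_eq_left h]; exact le_add_of_nonneg_right (abs_nonneg _)
    · rw [min_eq_right h]; exact le_add_of_nonneg_left (abs_nonneg _)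

/-- The pointwise (coordinatewise) partial order on `ℓ¹`. -/
instance : PartialOrder (PreLp fun _ : ℕ => ℝ) :=
  inferInstanceAs (PartialOrder (∀ _ : ℕ, ℝ))

instance : PartialOrder ell1 := Subtype.partialOrder _

/-- The pointwise lattice structure on `ℓ¹`. -/
instance : Lattice ell1 where
  sup f g := ⟨fun i => f i ⊔ g i, memℓp_sup (lp.memℓp f) (lp.memℓp g)⟩
  inf f g := ⟨fun i => f i ⊓ g i, memℓp_inf (lp.memℓp f) (lp.memℓp g)⟩
  le_sup_left f g := Subtype.coe_le_coe.mp fun _ => le_sup_left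
  le_sup_right f g := Subtype.coe_le_coe.mp fun _ => le_sup_right
  sup_le f g h hf hg := Subtype.coe_le_coe.mp fun i =>
    sup_le (Subtype.coe_le_coe.mpr hf i) (Subtype.coe_le_coe.mpr hg i)
  inf_le_left f g := Subtype.coe_le_coe.mp fun _ => inf_le_left
  inf_le_right f g := Subtype.coe_le_coe.mp fun _ => inf_le_right
  le_inf f g h hf hg := Subtype.coe_le_coe.mp fun i =>
    le_inf (Subtype.coe_le_coe.mpr hf i) (Subtype.coe_le_coe.mpr hg i)

/-- The standard unit vectors of `ℓ¹`. -/
def eseq (n : ℕ) : ell1 := lp.single 1 n 1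

/-! `T` is a bounded functional, hence compact (`ℝ` is locally compact) and trivially
Dunford-Pettis, since `T` is itself one of the functionals testing weak convergence.
For `0 ≤ u ∈ ℓ¹` one has `|e_n| ⊓ u = min (u_n, 1) e_n`, whose norm is at most `u_n → 0`, so
`(e_n)` is uaw-null; but `T e_n = 1`, and in `ℝ` un-null sequences are norm null. -/

section

variable {E F : Type*} [NormedAddCommGroup E] [NormedSpace ℝ E]
  [NormedAddCommGroup F] [NormedSpace ℝ F]

def IsDunfordPettis (T : E →L[ℝ] F) : Prop :=
  ∀ x : ℕ → E, (∀ f : E →L[ℝ] ℝ, Tendsto (fun n => f (x n)) atTop (𝓝 0)) →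
    Tendsto (fun n => ‖T (x n)‖) atTop (𝓝 0)

lemma isDunfordPettis_functional (T : E →L[ℝ] ℝ) : IsDunfordPettis T :=
  fun _ hx => tendsto_zero_iff_norm_tendsto_zero.mp (hx T)

variable [Lattice E]

def UawNull (x : ℕ → E) : Prop :=
  ∀ u : E, 0 ≤ u → ∀ f : E →L[ℝ] ℝ, Tendsto (fun n => f (|x n| ⊓ u)) atTop (𝓝 0)

def IsSigmaUDP [Lattice F] (T : E →L[ℝ] F) : Prop :=
  ∀ x : ℕ → E, (∃ C : ℝ, ∀ n, ‖x n‖ ≤ C) → UawNull x →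
    ∀ v : F, 0 ≤ v → Tendsto (fun n => ‖|T (x n)| ⊓ v‖) atTop (𝓝 0)

lemma uawNull_of_forall_tendsto_abs_inf {x : ℕ → E}
    (hx : ∀ u : E, 0 ≤ u → Tendsto (fun n => |x n| ⊓ u) atTop (𝓝 0)) : UawNull x := by
  intro u hu f
  exact (f.continuous.tendsto' 0 0 (map_zero f)).comp (hx u hu)

lemma Real.tendsto_zero_of_tendsto_norm_abs_inf_one {y : ℕ → ℝ}
    (hy : Tendsto (fun n => ‖|y n| ⊓ 1‖) atTop (𝓝 0)) : Tendsto y atTop (𝓝 0) := by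
  refine tendsto_zero_iff_norm_tendsto_zero.mpr (hy.congr' ?_)
  filter_upwards [hy.eventually (gt_mem_nhds one_pos)] with n hn
  rw [Real.norm_of_nonneg (le_inf (abs_nonneg _) zero_le_one), inf_lt_iff] at hn
  have hlt : |y n| < 1 := hn.resolve_right (lt_irrefl 1)
  rw [inf_eq_left.mpr hlt.le, Real.norm_eq_abs, abs_abs, Real.norm_eq_abs]

lemma IsSigmaUDP.tendsto_zero {T : E →L[ℝ] ℝ} (hT : IsSigmaUDP T) {x : ℕ → E}
    (hbdd : ∃ C : ℝ, ∀ n, ‖x n‖ ≤ C) (hx : UawNull x) : Tendsto (fun n => T (x n)) atTop (𝓝 0) :=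
  Real.tendsto_zero_of_tendsto_norm_abs_inf_one (hT x hbdd hx 1 zero_le_one)

end

namespace ell1

lemma inf_apply (x y : ell1) (i : ℕ) : (x ⊓ y) i = x i ⊓ y i := rfl

lemma abs_apply (x : ell1) (i : ℕ) : |x| i = |x i| := by
  show x i ⊔ (-x) i = |x i|
  rw [lp.coeFn_neg]
  rfl

lemma apply_nonneg {u : ell1} (hu : 0 ≤ u) (i : ℕ) : 0 ≤ u i :=
  Subtype.coe_le_coe.mpr hu i

lemma tendsto_apply_zero (u : ell1) : Tendsto (fun n => u n) atTop (𝓝 0) := by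
  have : Summable fun n => ‖u n‖ := by simpa using (lp.memℓp u).summable one_pos
  exact tendsto_zero_iff_norm_tendsto_zero.mpr this.tendsto_atTop_zero

end ell1

lemma norm_eseq (n : ℕ) : ‖eseq n‖ = 1 := by
  simp [eseq, lp.norm_single]

lemma tsum_eseq (n : ℕ) : ∑' i, eseq n i = 1 :=
  (tsum_eq_single n fun _ => lp.single_apply_ne 1 n _).trans (lp.single_apply_self 1 n _)

lemma abs_eseq_inf {u : ell1} (hu : 0 ≤ u) (n : ℕ) : |eseq n| ⊓ u = lp.single 1 n (u n ⊓ 1) := by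
  ext i
  rw [ell1.inf_apply, ell1.abs_apply, eseq, lp.single_apply, lp.single_apply, Pi.single_apply,
    Pi.single_apply]
  split_ifs with h
  · subst h; simp [inf_comm]
  · simp [ell1.apply_nonneg hu i]

lemma tendsto_abs_eseq_inf {u : ell1} (hu : 0 ≤ u) :
    Tendsto (fun n => |eseq n| ⊓ u) atTop (𝓝 0) := by
  refine tendsto_zero_iff_norm_tendsto_zero.mpr <|
    squeeze_zero (fun _ => norm_nonneg _) (fun n => ?_) (ell1.tendsto_apply_zero u)
  rw [abs_eseq_inf hu, lp.norm_single one_pos, Real.norm_of_nonneg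
    (le_inf (ell1.apply_nonneg hu n) zero_le_one)]
  exact inf_le_left

lemma uawNull_eseq : UawNull eseq :=
  uawNull_of_forall_tendsto_abs_inf fun _ => tendsto_abs_eseq_inf

/-- the summation functional `T : ℓ¹ → ℝ` is compact (hence Dunford-Pettis),
but not σ-unbounded Dunford-Pettis: the standard unit vectors form a norm bounded
uaw-null sequence with `T e_n = 1` for all `n`, so `(T e_n)` does not converge to `0`. -/
theorem summation_functional_compact_dunfordPettis_not_sigmaUDP
    (T : ell1 →L[ℝ] ℝ) (hT : ∀ x : ell1, T x = ∑' n, x n) :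
    IsCompactOperator T ∧
    (∀ x : ℕ → ell1,
        (∀ f : ell1 →L[ℝ] ℝ, Tendsto (fun n => f (x n)) atTop (𝓝 0)) →
        Tendsto (fun n => ‖T (x n)‖) atTop (𝓝 0)) ∧
    (∀ n, ‖eseq n‖ ≤ 1) ∧
    (∀ u : ell1, 0 ≤ u → ∀ f : ell1 →L[ℝ] ℝ,
        Tendsto (fun n => f (|eseq n| ⊓ u)) atTop (𝓝 0)) ∧
    (∀ n, T (eseq n) = 1) ∧
    ¬ Tendsto (fun n => T (eseq n)) atTop (𝓝 0) ∧
    ¬ (∀ x : ℕ → ell1, (∃ C : ℝ, ∀ n, ‖x n‖ ≤ C) →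
        (∀ u : ell1, 0 ≤ u → ∀ f : ell1 →L[ℝ] ℝ,
          Tendsto (fun n => f (|x n| ⊓ u)) atTop (𝓝 0)) →
        ∀ v : ℝ, 0 ≤ v → Tendsto (fun n => ‖|T (x n)| ⊓ v‖) atTop (𝓝 0)) := by
  have hTe (n : ℕ) : T (eseq n) = 1 := (hT _).trans (tsum_eseq n)
  have hbdd (n : ℕ) : ‖eseq n‖ ≤ 1 := (norm_eseq n).le
  have hTe_not_null : ¬ Tendsto (fun n => T (eseq n)) atTop (𝓝 0) := by
    simpa only [hTe] using (tendsto_const_nhds_iff (c := (1 : ℝ))).not.mpr one_ne_zero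
  have hnot_sigmaUDP : ¬ IsSigmaUDP T := fun h =>
    hTe_not_null (h.tendsto_zero ⟨1, hbdd⟩ uawNull_eseq)
  exact ⟨isCompactOperator_of_locallyCompactSpace_dom T, isDunfordPettis_functional T, hbdd,
    uawNull_eseq, hTe, hTe_not_null, hnot_sigmaUDP⟩
end
end
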